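/- Let μ be a probability measure on a measurable space Ω, Φ(x) = x²/log(e+|x|) and ψ(x) = e^{x²} − 1. Then for all measurable f, g : Ω → ℝ one has ‖fg‖_{Φ;μ} ≤ 24 · ‖f‖_{ψ;μ} · ‖g‖_{L²(μ)}. -/

import Mathlib

open MeasureTheory Real
open scoped ENNReal

/-- The function `Φ(x) = x² / log(e + |x|)`. -/
noncomputable def Phi (x : ℝ) : ℝ := x ^ 2 / Real.log (Real.exp 1 + |x|)

/-- The function `ψ(x) = e^{x²} − 1`. -/
noncomputable def psiOrl (x : ℝ) : ℝ := Real.exp (x ^ 2) - 1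

/-- The Orlicz (Luxemburg) norm `‖f‖_{φ;μ} = inf {a > 0 : ∫ φ(f/a) dμ ≤ 1}`,
valued in `[0,∞]` (it is `∞` when no such `a` exists). -/
noncomputable def orliczNorm {Ω : Type*} [MeasurableSpace Ω] (μ : Measure Ω)
    (φ : ℝ → ℝ) (f : Ω → ℝ) : ℝ≥0∞ :=
  sInf {a : ℝ≥0∞ | ∃ r : ℝ, 0 < r ∧ a = ENNReal.ofReal r ∧
    ∫⁻ x, ENNReal.ofReal (φ (f x / r)) ∂μ ≤ 1}

lemma psiOrl_nonneg (x : ℝ) : 0 ≤ psiOrl x := by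
  have := Real.one_le_exp (sq_nonneg x)
  simp only [psiOrl]; linarith

lemma one_le_logE (x : ℝ) : 1 ≤ Real.log (Real.exp 1 + |x|) := by
  rw [Real.le_log_iff_exp_le (by positivity)]
  simpa using abs_nonneg x

lemma key_pointwise (u v : ℝ) : Phi (u * v / 24) ≤ (psiOrl u + v ^ 2) / 2 := by
  set s := u * v / 24 with hs
  have hL1 : 1 ≤ Real.log (Real.exp 1 + |s|) := one_le_logE s
  have hLpos : (0:ℝ) < Real.log (Real.exp 1 + |s|) := by linarith
  rcases le_or_gt (u ^ 2) (288 * Real.log (Real.exp 1 + |s|)) with h | h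
  · have hv := sq_nonneg v
    have hP : Phi s ≤ v ^ 2 / 2 := by
      unfold Phi
      rw [div_le_iff₀ hLpos]
      have hs2 : s ^ 2 = u ^ 2 * v ^ 2 / 576 := by rw [hs]; ring
      nlinarith [mul_le_mul_of_nonneg_right h (sq_nonneg v)]
    have := psiOrl_nonneg u
    linarith
  · have hu : (288:ℝ) ≤ u ^ 2 := by nlinarith
    have hexp : Real.exp 1 + |s| < Real.exp (u ^ 2 / 288) := by
      calc Real.exp 1 + |s| = Real.exp (Real.log (Real.exp 1 + |s|)) := by
             rw [Real.exp_log (by positivity)]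
        _ < Real.exp (u ^ 2 / 288) := Real.exp_lt_exp.mpr (by linarith)
    have habs : |s| < Real.exp (u ^ 2 / 288) := by
      have : (0:ℝ) < Real.exp 1 := Real.exp_pos 1
      linarith
    have hsq : s ^ 2 < Real.exp (u ^ 2 / 144) := by
      have h2 : |s| ^ 2 < Real.exp (u ^ 2 / 288) ^ 2 := by
        have := abs_nonneg s
        nlinarith
      have h3 : Real.exp (u ^ 2 / 288) ^ 2 = Real.exp (u ^ 2 / 144) := by
        rw [sq, ← Real.exp_add]; ring_nf
      rw [← sq_abs s]; linarith
    have hPhi : Phi s ≤ s ^ 2 := div_le_self (sq_nonneg s) hL1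
    have hE1 : 1 ≤ Real.exp (u ^ 2 / 144) := Real.one_le_exp (by positivity)
    have hsplit : Real.exp (u ^ 2) = Real.exp (u ^ 2 / 144) * Real.exp (143 * u ^ 2 / 144) := by
      rw [← Real.exp_add]; ring_nf
    have h4 : (3:ℝ) ≤ Real.exp (143 * u ^ 2 / 144) := by
      have h5 : Real.exp 2 ≤ Real.exp (143 * u ^ 2 / 144) := Real.exp_le_exp.mpr (by nlinarith)
      linarith [Real.add_one_le_exp (2:ℝ)]
    have h6 : 3 * Real.exp (u ^ 2 / 144) ≤ Real.exp (u ^ 2) := by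
      rw [hsplit]; nlinarith
    have := sq_nonneg v
    simp only [psiOrl]
    linarith

lemma phi_nonneg (x : ℝ) : 0 ≤ Phi x := by
  have := one_le_logE x
  unfold Phi; positivity

lemma meas_psiOrl : Measurable psiOrl := by
  have : Continuous psiOrl := by unfold psiOrl; continuity
  exact this.measurable

lemma integral_key {Ω : Type*} [MeasurableSpace Ω] (μ : Measure Ω)
    (f g : Ω → ℝ) (hf : Measurable f) (hg : Measurable g) (a b : ℝ)
    (ha : 0 < a) (hb : 0 < b)
    (hfa : ∫⁻ x, ENNReal.ofReal (psiOrl (f x / a)) ∂μ ≤ 1)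
    (hgb : ∫⁻ x, ENNReal.ofReal ((g x / b) ^ 2) ∂μ ≤ 1) :
    ∫⁻ x, ENNReal.ofReal (Phi (f x * g x / (24 * a * b))) ∂μ ≤ 1 := by
  have hmA : Measurable fun x => ENNReal.ofReal (psiOrl (f x / a)) :=
    (meas_psiOrl.comp (hf.div_const a)).ennreal_ofReal
  have hmB : Measurable fun x => ENNReal.ofReal ((g x / b) ^ 2) :=
    ((hg.div_const b).pow_const 2).ennreal_ofReal
  have hpt : ∀ x, ENNReal.ofReal (Phi (f x * g x / (24 * a * b))) ≤
      ENNReal.ofReal (psiOrl (f x / a)) / 2 + ENNReal.ofReal ((g x / b) ^ 2) / 2 := by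
    intro x
    have harg : f x * g x / (24 * a * b) = (f x / a) * (g x / b) / 24 := by
      field_simp
    rw [harg]
    calc ENNReal.ofReal (Phi ((f x / a) * (g x / b) / 24))
        ≤ ENNReal.ofReal ((psiOrl (f x / a) + (g x / b) ^ 2) / 2) :=
          ENNReal.ofReal_le_ofReal (key_pointwise _ _)
      _ = (ENNReal.ofReal (psiOrl (f x / a)) + ENNReal.ofReal ((g x / b) ^ 2)) / 2 := by
          rw [ENNReal.ofReal_div_of_pos two_pos,
            ENNReal.ofReal_add (psiOrl_nonneg _) (sq_nonneg _)]
          norm_num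
      _ = _ := by rw [ENNReal.add_div]
  calc ∫⁻ x, ENNReal.ofReal (Phi (f x * g x / (24 * a * b))) ∂μ
      ≤ ∫⁻ x, (ENNReal.ofReal (psiOrl (f x / a)) / 2 + ENNReal.ofReal ((g x / b) ^ 2) / 2) ∂μ :=
        lintegral_mono hpt
    _ = (∫⁻ x, ENNReal.ofReal (psiOrl (f x / a)) ∂μ) / 2
        + (∫⁻ x, ENNReal.ofReal ((g x / b) ^ 2) ∂μ) / 2 := by
        rw [lintegral_add_left (hmA.div_const 2)]
        simp only [ENNReal.div_eq_inv_mul]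
        rw [lintegral_const_mul _ hmA, lintegral_const_mul _ hmB]
    _ ≤ 1 / 2 + 1 / 2 := by gcongr
    _ = 1 := ENNReal.add_halves 1

lemma orlicz_zero_of_ae {Ω : Type*} [MeasurableSpace Ω] (μ : Measure Ω) (φ : ℝ → ℝ)
    (hφ : φ 0 = 0) (h : Ω → ℝ) (hh : h =ᵐ[μ] 0) : orliczNorm μ φ h = 0 := by
  refine le_antisymm ?_ zero_le
  refine ENNReal.le_of_forall_pos_le_add fun ε hε _ => ?_
  have hmem : ENNReal.ofReal ε ∈ {a : ℝ≥0∞ | ∃ r : ℝ, 0 < r ∧ a = ENNReal.ofReal r ∧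
      ∫⁻ x, ENNReal.ofReal (φ (h x / r)) ∂μ ≤ 1} := by
    refine ⟨ε, hε, rfl, ?_⟩
    have h0 : (fun x => ENNReal.ofReal (φ (h x / (ε:ℝ)))) =ᵐ[μ] 0 := by
      filter_upwards [hh] with x hx
      simp [hx, hφ]
    rw [lintegral_congr_ae h0]
    simp
  have := sInf_le hmem
  simp only [ENNReal.ofReal_coe_nnreal] at this
  rw [zero_add]; exact this

lemma ae_zero_of_psi_zero {Ω : Type*} [MeasurableSpace Ω] (μ : Measure Ω)
    (f : Ω → ℝ) (hf : Measurable f) (h0 : orliczNorm μ psiOrl f = 0) : f =ᵐ[μ] 0 := by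
  have key : ∀ δ : ℝ, 0 < δ → δ ≤ 1 →
      ∫⁻ x, ENNReal.ofReal (f x ^ 2) ∂μ ≤ ENNReal.ofReal δ := by
    intro δ hδ hδ1
    have hlt : orliczNorm μ psiOrl f < ENNReal.ofReal δ := by
      rw [h0]; exact ENNReal.ofReal_pos.mpr hδ
    obtain ⟨s, hs, hslt⟩ := sInf_lt_iff.mp hlt
    obtain ⟨r, hr, rfl, hint⟩ := hs
    have hrδ : r < δ := by
      rwa [ENNReal.ofReal_lt_ofReal_iff hδ] at hslt
    have hpt : ∀ x, ENNReal.ofReal (f x ^ 2) ≤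
        ENNReal.ofReal (psiOrl (f x / r)) * ENNReal.ofReal (r ^ 2) := by
      intro x
      rw [← ENNReal.ofReal_mul (psiOrl_nonneg _)]
      apply ENNReal.ofReal_le_ofReal
      have h1 : (f x / r) ^ 2 + 1 ≤ Real.exp ((f x / r) ^ 2) := Real.add_one_le_exp _
      have h2 : (f x / r) ^ 2 * r ^ 2 = f x ^ 2 := by field_simp
      have h3 := sq_nonneg r
      simp only [psiOrl]
      nlinarith [sq_nonneg (f x / r)]
    calc ∫⁻ x, ENNReal.ofReal (f x ^ 2) ∂μ
        ≤ ∫⁻ x, ENNReal.ofReal (psiOrl (f x / r)) * ENNReal.ofReal (r ^ 2) ∂μ :=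
          lintegral_mono hpt
      _ = (∫⁻ x, ENNReal.ofReal (psiOrl (f x / r)) ∂μ) * ENNReal.ofReal (r ^ 2) :=
          lintegral_mul_const _ ((meas_psiOrl.comp (hf.div_const r)).ennreal_ofReal)
      _ ≤ 1 * ENNReal.ofReal (r ^ 2) := by gcongr
      _ = ENNReal.ofReal (r ^ 2) := one_mul _
      _ ≤ ENNReal.ofReal δ := ENNReal.ofReal_le_ofReal (by nlinarith)
  have hzero : ∫⁻ x, ENNReal.ofReal (f x ^ 2) ∂μ = 0 := by
    refine le_antisymm ?_ zero_le
    refine ENNReal.le_of_forall_pos_le_add fun ε hε _ => ?_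
    have := key (min 1 ε) (lt_min one_pos hε) (min_le_left _ _)
    refine le_trans this ?_
    rw [zero_add]
    refine le_trans (ENNReal.ofReal_le_ofReal (min_le_right (1:ℝ) ε)) ?_
    simp
  have := (lintegral_eq_zero_iff ((hf.pow_const 2).ennreal_ofReal)).mp hzero
  filter_upwards [this] with x hx
  simp only [Pi.zero_apply, ENNReal.ofReal_eq_zero] at hx
  have := sq_nonneg (f x)
  have : f x ^ 2 = 0 := le_antisymm hx this
  exact pow_eq_zero_iff two_ne_zero |>.mp this

lemma g_normalized {Ω : Type*} [MeasurableSpace Ω] (μ : Measure Ω)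
    (g : Ω → ℝ) (hg : Measurable g) (hB0 : eLpNorm g 2 μ ≠ 0) (hBt : eLpNorm g 2 μ ≠ ⊤) :
    ∫⁻ x, ENNReal.ofReal ((g x / (eLpNorm g 2 μ).toReal) ^ 2) ∂μ ≤ 1 := by
  set B := eLpNorm g 2 μ with hB
  have hbpos : 0 < B.toReal := ENNReal.toReal_pos hB0 hBt
  have hI : ∫⁻ x, ENNReal.ofReal (g x ^ 2) ∂μ = B ^ 2 := by
    have h1 : B = (∫⁻ x, (‖g x‖₊ : ℝ≥0∞) ^ (2:ℝ) ∂μ) ^ (1/(2:ℝ)) := by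
      rw [hB, eLpNorm_eq_lintegral_rpow_enorm_toReal (by norm_num) (by norm_num)]
      norm_num
      rfl
    have h2 : B ^ (2:ℝ) = ∫⁻ x, (‖g x‖₊ : ℝ≥0∞) ^ (2:ℝ) ∂μ := by
      rw [h1, ← ENNReal.rpow_mul]
      norm_num
    have h3 : ∀ x, ENNReal.ofReal (g x ^ 2) = (‖g x‖₊ : ℝ≥0∞) ^ (2:ℝ) := by
      intro x
      rw [← enorm_eq_nnnorm, Real.enorm_eq_ofReal_abs,
        show ((2:ℝ)) = ((2:ℕ):ℝ) by norm_num, ENNReal.rpow_natCast,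
        ← ENNReal.ofReal_pow (abs_nonneg _), sq_abs]
    calc ∫⁻ x, ENNReal.ofReal (g x ^ 2) ∂μ = ∫⁻ x, (‖g x‖₊ : ℝ≥0∞) ^ (2:ℝ) ∂μ := by
          exact lintegral_congr fun x => h3 x
      _ = B ^ (2:ℝ) := h2.symm
      _ = B ^ 2 := by rw [← ENNReal.rpow_natCast B 2]; norm_num
  have hpt : ∀ x, ENNReal.ofReal ((g x / B.toReal) ^ 2) =
      ENNReal.ofReal (g x ^ 2) * ENNReal.ofReal (1 / B.toReal ^ 2) := by
    intro x
    rw [← ENNReal.ofReal_mul (sq_nonneg _)]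
    congr 1
    field_simp
  calc ∫⁻ x, ENNReal.ofReal ((g x / B.toReal) ^ 2) ∂μ
      = (∫⁻ x, ENNReal.ofReal (g x ^ 2) ∂μ) * ENNReal.ofReal (1 / B.toReal ^ 2) := by
        rw [← lintegral_mul_const _ ((hg.pow_const 2).ennreal_ofReal)]
        exact lintegral_congr fun x => hpt x
    _ = B ^ 2 * (B ^ 2)⁻¹ := by
        rw [hI]
        congr 1
        rw [one_div, ENNReal.ofReal_inv_of_pos (by positivity), ENNReal.ofReal_pow hbpos.le,
          ENNReal.ofReal_toReal hBt]
    _ = 1 := ENNReal.mul_inv_cancel (pow_ne_zero _ hB0) (ENNReal.pow_ne_top hBt)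
    _ ≤ 1 := le_refl _


/-- Hölder-type inequality for Orlicz norms: `‖fg‖_Φ ≤ 24 ‖f‖_ψ ‖g‖_{L²(μ)}`. -/
theorem stmt18 {Ω : Type*} [MeasurableSpace Ω] (μ : Measure Ω) [IsProbabilityMeasure μ]
    (f g : Ω → ℝ) (hf : Measurable f) (hg : Measurable g) :
    orliczNorm μ Phi (fun x => f x * g x) ≤
      24 * orliczNorm μ psiOrl f * eLpNorm g 2 μ := by
  have hPhi0 : Phi 0 = 0 := by simp [Phi]
  rcases eq_or_ne (eLpNorm g 2 μ) 0 with hB0 | hB0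
  · have hg0 : g =ᵐ[μ] 0 := (eLpNorm_eq_zero_iff hg.aestronglyMeasurable (by norm_num)).mp hB0
    have hfg : (fun x => f x * g x) =ᵐ[μ] 0 := by
      filter_upwards [hg0] with x hx
      simp only [Pi.zero_apply] at hx ⊢
      simp [hx]
    rw [orlicz_zero_of_ae μ Phi hPhi0 _ hfg]
    exact zero_le
  rcases eq_or_ne (orliczNorm μ psiOrl f) 0 with hA0 | hA0
  · have hf0 := ae_zero_of_psi_zero μ f hf hA0
    have hfg : (fun x => f x * g x) =ᵐ[μ] 0 := by
      filter_upwards [hf0] with x hx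
      simp only [Pi.zero_apply] at hx ⊢
      simp [hx]
    rw [orlicz_zero_of_ae μ Phi hPhi0 _ hfg]
    exact zero_le
  rcases eq_or_ne (orliczNorm μ psiOrl f) ⊤ with hAt | hAt
  · rw [hAt, ENNReal.mul_top (by norm_num), ENNReal.top_mul hB0]
    exact le_top
  rcases eq_or_ne (eLpNorm g 2 μ) ⊤ with hBt | hBt
  · rw [hBt, ENNReal.mul_top (by simp [hA0])]
    exact le_top
  -- main case
  have hbpos : 0 < (eLpNorm g 2 μ).toReal := ENNReal.toReal_pos hB0 hBt
  have hgb := g_normalized μ g hg hB0 hBt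
  have main : ∀ r : ℝ, 0 < r → (∫⁻ x, ENNReal.ofReal (psiOrl (f x / r)) ∂μ ≤ 1) →
      orliczNorm μ Phi (fun x => f x * g x) ≤
        ENNReal.ofReal (24 * r * (eLpNorm g 2 μ).toReal) := by
    intro r hr hint
    apply sInf_le
    exact ⟨24 * r * (eLpNorm g 2 μ).toReal, by positivity, rfl,
      integral_key μ f g hf hg r (eLpNorm g 2 μ).toReal hr hbpos hint hgb⟩
  refine ENNReal.le_of_forall_pos_le_add fun ε hε htop => ?_
  have hεpos : (0:ℝ) < (ε:ℝ) := hε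
  set b : ℝ := (eLpNorm g 2 μ).toReal with hb
  set δ : ℝ := (ε:ℝ) / (24 * (b + 1)) with hδ
  have hδpos : 0 < δ := by positivity
  have hlt : orliczNorm μ psiOrl f < orliczNorm μ psiOrl f + ENNReal.ofReal δ :=
    ENNReal.lt_add_right hAt (by simp [ENNReal.ofReal_eq_zero]; linarith)
  obtain ⟨s, hs, hslt⟩ := sInf_lt_iff.mp hlt
  obtain ⟨r, hr, rfl, hint⟩ := hs
  have hAnn : (0:ℝ) ≤ (orliczNorm μ psiOrl f).toReal := ENNReal.toReal_nonneg
  have hrle : r ≤ (orliczNorm μ psiOrl f).toReal + δ := by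
    have h1 : ENNReal.ofReal r < ENNReal.ofReal ((orliczNorm μ psiOrl f).toReal + δ) := by
      rwa [ENNReal.ofReal_add ENNReal.toReal_nonneg hδpos.le, ENNReal.ofReal_toReal hAt]
    exact le_of_lt ((ENNReal.ofReal_lt_ofReal_iff (by positivity)).mp h1)
  refine le_trans (main r hr hint) ?_
  have heq : (24:ℝ≥0∞) * orliczNorm μ psiOrl f * eLpNorm g 2 μ =
      ENNReal.ofReal (24 * (orliczNorm μ psiOrl f).toReal * b) := by
    rw [ENNReal.ofReal_mul (by positivity), ENNReal.ofReal_mul (by norm_num),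
      ENNReal.ofReal_toReal hAt, hb, ENNReal.ofReal_toReal hBt]
    norm_num
  calc ENNReal.ofReal (24 * r * b)
      ≤ ENNReal.ofReal (24 * ((orliczNorm μ psiOrl f).toReal + δ) * b) := by
        apply ENNReal.ofReal_le_ofReal
        nlinarith
    _ = ENNReal.ofReal (24 * (orliczNorm μ psiOrl f).toReal * b)
        + ENNReal.ofReal (24 * δ * b) := by
        rw [← ENNReal.ofReal_add (by positivity) (by positivity)]
        ring_nf
    _ ≤ 24 * orliczNorm μ psiOrl f * eLpNorm g 2 μ + ↑ε := by
        rw [heq]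
        gcongr
        have h24 : 24 * δ * b ≤ (ε:ℝ) := by
          have hkey : 24 * δ * b = (ε:ℝ) * (b / (b + 1)) := by
            rw [hδ]; field_simp
          have hle : b / (b + 1) ≤ 1 := by
            rw [div_le_one (by positivity)]; linarith
          nlinarith
        exact le_trans (ENNReal.ofReal_le_ofReal h24) (by simp)
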